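/- arXiv:math/0008011 — 2 statements merged into one kernel-verified Lean document; each statement's English description precedes it below -/
import Mathlib

section
/- Let P = {x ∈ L : ⟨x, o₁⟩ = 0 and ⟨x, o₂⟩ = 0} and let W be the subgroup of L generated by f, e₉, f + eᵢ − e₁ + e₉ for i = 2, 3, 4, 5, 6, and 2e₇ − e₈ + 2f (the lattice Pic^W(B) generated by f and the classes of sections meeting the neutral component of every fiber). Then: (i) P equals the subgroup of L generated by e₉, eᵢ − e₁ for i = 2, 3, 4, 5, 6, ℓ − e₇ − 2e₁, and 2ℓ − e₈ − 4e₁; (ii) W ⊆ P; and (iii) W has index 3 in P, i.e. the quotient group P/W has exactly 3 elements. -/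
/-! Statement 10: the lattice `Pic^W(B)` is contained in `Span(o₁,o₂)^⊥` as a
sublattice of index 3, and `Span(o₁,o₂)^⊥` is generated by the listed classes. -/

noncomputable section

def el : Fin 10 → ℤ := Pi.single 0 1
def e1 : Fin 10 → ℤ := Pi.single 1 1
def e2 : Fin 10 → ℤ := Pi.single 2 1
def e3 : Fin 10 → ℤ := Pi.single 3 1
def e4 : Fin 10 → ℤ := Pi.single 4 1
def e5 : Fin 10 → ℤ := Pi.single 5 1
def e6 : Fin 10 → ℤ := Pi.single 6 1
def e7 : Fin 10 → ℤ := Pi.single 7 1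
def e8 : Fin 10 → ℤ := Pi.single 8 1
def e9 : Fin 10 → ℤ := Pi.single 9 1

/-- The intersection form: `⟨ℓ,ℓ⟩ = 1`, `⟨eᵢ,eⱼ⟩ = -δᵢⱼ`, `⟨ℓ,eᵢ⟩ = 0`. -/
def form (x y : Fin 10 → ℤ) : ℤ := 2 * x 0 * y 0 - ∑ i, x i * y i

def ff : Fin 10 → ℤ := (3 : ℤ) • el - (e1 + e2 + e3 + e4 + e5 + e6 + e7 + e8 + e9)
def n1 : Fin 10 → ℤ := e8 - e9
def o1 : Fin 10 → ℤ := ff - e8 + e9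
def n2 : Fin 10 → ℤ := el - e7 - e8 - e9
def o2 : Fin 10 → ℤ := (2 : ℤ) • el - (e1 + e2 + e3 + e4 + e5 + e6)

lemma form_add_left (x y z : Fin 10 → ℤ) : form (x + y) z = form x z + form y z := by
  simp only [form, Pi.add_apply, add_mul, Finset.sum_add_distrib]
  ring

lemma form_neg_left (x z : Fin 10 → ℤ) : form (-x) z = -form x z := by
  simp only [form, Pi.neg_apply, neg_mul, Finset.sum_neg_distrib]
  ring

/-- The orthogonal complement of `Span(o₁, o₂)` in the lattice. -/
def P : AddSubgroup (Fin 10 → ℤ) where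
  carrier := {x | form x o1 = 0 ∧ form x o2 = 0}
  zero_mem' := by constructor <;> simp [form]
  add_mem' := by
    rintro x y ⟨hx1, hx2⟩ ⟨hy1, hy2⟩
    exact ⟨by simp [form_add_left, hx1, hy1], by simp [form_add_left, hx2, hy2]⟩
  neg_mem' := by
    rintro x ⟨hx1, hx2⟩
    exact ⟨by simp [form_neg_left, hx1], by simp [form_neg_left, hx2]⟩

/-- The lattice `Pic^W(B)`, generated by `f`, `e₉`, `f + eᵢ - e₁ + e₉` (`i = 2,…,6`)
and `2e₇ - e₈ + 2f`. -/
def W : AddSubgroup (Fin 10 → ℤ) :=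
  AddSubgroup.closure {ff, e9, ff + e2 - e1 + e9, ff + e3 - e1 + e9, ff + e4 - e1 + e9,
    ff + e5 - e1 + e9, ff + e6 - e1 + e9, (2 : ℤ) • e7 - e8 + (2 : ℤ) • ff}

/-! ### Auxiliary lemmas -/

lemma sum_ten (x : Fin 10 → ℤ) :
    ∑ i, x i = x 0 + x 1 + x 2 + x 3 + x 4 + x 5 + x 6 + x 7 + x 8 + x 9 := by
  rw [show (Finset.univ : Finset (Fin 10)) = {0,1,2,3,4,5,6,7,8,9} from rfl]
  simp [Finset.sum_insert, Finset.mem_insert]; ring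

lemma form_o1 (x : Fin 10 → ℤ) :
    form x o1 = 3*x 0 + x 1 + x 2 + x 3 + x 4 + x 5 + x 6 + x 7 + 2*x 8 := by
  rw [form, sum_ten (fun i => x i * o1 i)]
  norm_num [show o1 0 = 3 from rfl, show o1 1 = -1 from rfl, show o1 2 = -1 from rfl,
    show o1 3 = -1 from rfl, show o1 4 = -1 from rfl, show o1 5 = -1 from rfl,
    show o1 6 = -1 from rfl, show o1 7 = -1 from rfl, show o1 8 = -2 from rfl,
    show o1 9 = 0 from rfl]
  ring

lemma form_o2 (x : Fin 10 → ℤ) :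
    form x o2 = 2*x 0 + x 1 + x 2 + x 3 + x 4 + x 5 + x 6 := by
  rw [form, sum_ten (fun i => x i * o2 i)]
  norm_num [show o2 0 = 2 from rfl, show o2 1 = -1 from rfl, show o2 2 = -1 from rfl,
    show o2 3 = -1 from rfl, show o2 4 = -1 from rfl, show o2 5 = -1 from rfl,
    show o2 6 = -1 from rfl, show o2 7 = 0 from rfl, show o2 8 = 0 from rfl,
    show o2 9 = 0 from rfl]
  ring

lemma mem_P_iff (x : Fin 10 → ℤ) :
    x ∈ P ↔ (3*x 0 + x 1 + x 2 + x 3 + x 4 + x 5 + x 6 + x 7 + 2*x 8 = 0 ∧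
      2*x 0 + x 1 + x 2 + x 3 + x 4 + x 5 + x 6 = 0) := by
  rw [show (x ∈ P ↔ form x o1 = 0 ∧ form x o2 = 0) from Iff.rfl, form_o1, form_o2]

set_option maxHeartbeats 2000000 in
lemma P_decomp (x : Fin 10 → ℤ)
    (h1 : 3*x 0 + x 1 + x 2 + x 3 + x 4 + x 5 + x 6 + x 7 + 2*x 8 = 0)
    (h2 : 2*x 0 + x 1 + x 2 + x 3 + x 4 + x 5 + x 6 = 0) :
    x = x 9 • e9 + x 2 • (e2 - e1) + x 3 • (e3 - e1) + x 4 • (e4 - e1) + x 5 • (e5 - e1)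
      + x 6 • (e6 - e1) + (-(x 7)) • (el - e7 - (2:ℤ) • e1)
      + (-(x 8)) • ((2:ℤ) • el - e8 - (4:ℤ) • e1) := by
  funext i
  fin_cases i <;>
    simp [el, e1, e2, e3, e4, e5, e6, e7, e8, e9, Pi.single_apply] <;> linarith

set_option maxHeartbeats 4000000 in
lemma W_decomp (x : Fin 10 → ℤ) (k : ℤ)
    (h1 : 3*x 0 + x 1 + x 2 + x 3 + x 4 + x 5 + x 6 + x 7 + 2*x 8 = 0)
    (h2 : 2*x 0 + x 1 + x 2 + x 3 + x 4 + x 5 + x 6 = 0)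
    (hk : x 8 - x 7 = 3*k) :
    x = (4*x 7 + 10*k - (x 2 + x 3 + x 4 + x 5 + x 6)) • ff
      + (x 9 + 4*x 7 + 8*k - (x 2 + x 3 + x 4 + x 5 + x 6)) • e9
      + (x 2 - x 7 - 2*k) • (ff + e2 - e1 + e9)
      + (x 3 - x 7 - 2*k) • (ff + e3 - e1 + e9)
      + (x 4 - x 7 - 2*k) • (ff + e4 - e1 + e9)
      + (x 5 - x 7 - 2*k) • (ff + e5 - e1 + e9)
      + (x 6 - x 7 - 2*k) • (ff + e6 - e1 + e9)
      + (-k) • ((2 : ℤ) • e7 - e8 + (2 : ℤ) • ff) := by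
  funext i
  fin_cases i <;>
    simp [ff, el, e1, e2, e3, e4, e5, e6, e7, e8, e9, Pi.single_apply] <;> ring_nf <;> linarith

/-- The homomorphism cutting out `W` inside `P`. -/
def phi : (Fin 10 → ℤ) →+ ZMod 3 where
  toFun x := ((x 8 - x 7 : ℤ) : ZMod 3)
  map_zero' := by simp
  map_add' x y := by simp only [Pi.add_apply]; push_cast; ring

lemma W_le_ker_phi : W ≤ phi.ker := by
  rw [W, AddSubgroup.closure_le]
  rintro g hg
  simp only [Set.mem_insert_iff, Set.mem_singleton_iff] at hg
  rcases hg with rfl|rfl|rfl|rfl|rfl|rfl|rfl|rfl <;>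
    simp [phi, AddMonoidHom.mem_ker, ff, el, e1, e2, e3, e4, e5, e6, e7, e8, e9,
      Pi.single_apply] <;> decide

lemma W_le_P : W ≤ P := by
  rw [W, AddSubgroup.closure_le]
  rintro g hg
  simp only [Set.mem_insert_iff, Set.mem_singleton_iff] at hg
  rcases hg with rfl|rfl|rfl|rfl|rfl|rfl|rfl|rfl <;>
    rw [SetLike.mem_coe, mem_P_iff] <;> constructor <;>
    simp [ff, el, e1, e2, e3, e4, e5, e6, e7, e8, e9, Pi.single_apply]

lemma mem_W_of_mem_P (x : Fin 10 → ℤ) (hx : x ∈ P) (h3 : (3:ℤ) ∣ x 8 - x 7) : x ∈ W := by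
  obtain ⟨h1, h2⟩ := (mem_P_iff x).mp hx
  obtain ⟨k, hk⟩ := h3
  rw [W_decomp x k h1 h2 hk]
  have m1 : ff ∈ W := AddSubgroup.subset_closure (by left; rfl)
  have m2 : e9 ∈ W := AddSubgroup.subset_closure (by right; left; rfl)
  have m3 : ff + e2 - e1 + e9 ∈ W := AddSubgroup.subset_closure (by
    right; right; left; rfl)
  have m4 : ff + e3 - e1 + e9 ∈ W := AddSubgroup.subset_closure (by
    right; right; right; left; rfl)
  have m5 : ff + e4 - e1 + e9 ∈ W := AddSubgroup.subset_closure (by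
    right; right; right; right; left; rfl)
  have m6 : ff + e5 - e1 + e9 ∈ W := AddSubgroup.subset_closure (by
    right; right; right; right; right; left; rfl)
  have m7 : ff + e6 - e1 + e9 ∈ W := AddSubgroup.subset_closure (by
    right; right; right; right; right; right; left; rfl)
  have m8 : (2 : ℤ) • e7 - e8 + (2 : ℤ) • ff ∈ W := AddSubgroup.subset_closure (by
    right; right; right; right; right; right; right; rfl)
  exact AddSubgroup.add_mem _ (AddSubgroup.add_mem _ (AddSubgroup.add_mem _
    (AddSubgroup.add_mem _ (AddSubgroup.add_mem _ (AddSubgroup.add_mem _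
    (AddSubgroup.add_mem _ (AddSubgroup.zsmul_mem _ m1 _) (AddSubgroup.zsmul_mem _ m2 _))
    (AddSubgroup.zsmul_mem _ m3 _)) (AddSubgroup.zsmul_mem _ m4 _))
    (AddSubgroup.zsmul_mem _ m5 _)) (AddSubgroup.zsmul_mem _ m6 _))
    (AddSubgroup.zsmul_mem _ m7 _)) (AddSubgroup.zsmul_mem _ m8 _)

lemma g7_mem_P : el - e7 - (2:ℤ) • e1 ∈ P := by
  rw [mem_P_iff] <;> constructor <;>
    simp [el, e1, e2, e3, e4, e5, e6, e7, e8, e9, Pi.single_apply]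

theorem stmt10 :
    P = AddSubgroup.closure {e9, e2 - e1, e3 - e1, e4 - e1, e5 - e1, e6 - e1,
      el - e7 - (2 : ℤ) • e1, (2 : ℤ) • el - e8 - (4 : ℤ) • e1} ∧
    W ≤ P ∧
    Nat.card (↥P ⧸ W.addSubgroupOf P) = 3 := by
  refine ⟨?_, W_le_P, ?_⟩
  · apply le_antisymm
    · intro x hx
      obtain ⟨h1, h2⟩ := (mem_P_iff x).mp hx
      rw [P_decomp x h1 h2]
      refine AddSubgroup.add_mem _ (AddSubgroup.add_mem _ (AddSubgroup.add_mem _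
        (AddSubgroup.add_mem _ (AddSubgroup.add_mem _ (AddSubgroup.add_mem _
        (AddSubgroup.add_mem _ (AddSubgroup.zsmul_mem _ ?_ _) (AddSubgroup.zsmul_mem _ ?_ _))
        (AddSubgroup.zsmul_mem _ ?_ _)) (AddSubgroup.zsmul_mem _ ?_ _))
        (AddSubgroup.zsmul_mem _ ?_ _)) (AddSubgroup.zsmul_mem _ ?_ _))
        (AddSubgroup.zsmul_mem _ ?_ _)) (AddSubgroup.zsmul_mem _ ?_ _) <;>
        apply AddSubgroup.subset_closure
      · left; rfl
      · right; left; rfl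
      · right; right; left; rfl
      · right; right; right; left; rfl
      · right; right; right; right; left; rfl
      · right; right; right; right; right; left; rfl
      · right; right; right; right; right; right; left; rfl
      · right; right; right; right; right; right; right; rfl
    · rw [AddSubgroup.closure_le]
      rintro g hg
      simp only [Set.mem_insert_iff, Set.mem_singleton_iff] at hg
      rcases hg with rfl|rfl|rfl|rfl|rfl|rfl|rfl|rfl <;>
        rw [SetLike.mem_coe, mem_P_iff] <;> constructor <;>
        simp [el, e1, e2, e3, e4, e5, e6, e7, e8, e9, Pi.single_apply]
  · -- index computation via the homomorphism `phi`
    set ψ : ↥P →+ ZMod 3 := phi.comp P.subtype with hψ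
    have hker : ψ.ker = W.addSubgroupOf P := by
      ext ⟨x, hx⟩
      constructor
      · intro h
        have h0 : ((x 8 - x 7 : ℤ) : ZMod 3) = 0 := h
        rw [ZMod.intCast_zmod_eq_zero_iff_dvd] at h0
        exact mem_W_of_mem_P x hx (by exact_mod_cast h0)
      · intro h
        have := W_le_ker_phi h
        exact this
    have hsurj : Function.Surjective ψ := by
      intro c
      obtain ⟨n, rfl⟩ := ZMod.intCast_surjective c
      refine ⟨⟨n • (el - e7 - (2:ℤ) • e1), AddSubgroup.zsmul_mem _ g7_mem_P _⟩, ?_⟩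
      show ((((n • (el - e7 - (2:ℤ) • e1)) 8 : ℤ) - (n • (el - e7 - (2:ℤ) • e1)) 7 : ℤ) : ZMod 3)
        = (n : ZMod 3)
      simp [el, e1, e7, Pi.single_apply]
    calc Nat.card (↥P ⧸ W.addSubgroupOf P) = Nat.card (↥P ⧸ ψ.ker) := by rw [hker]
      _ = Nat.card (ZMod 3) :=
          Nat.card_congr (QuotientAddGroup.quotientKerEquivOfSurjective ψ hsurj).toEquiv
      _ = 3 := Nat.card_zmod 3
end
end

section
/- With F, G = ∂F/∂z and α̃ as in the context, for every v ∈ ℂ³ \ {0} with G(v) ≠ 0 the following holds: [α̃(v)] = [v] in ℙ²(ℂ) if and only if F(v) = 0. In particular the birational involution α of ℙ² induced by α̃ fixes the cubic Γ = {F = 0} pointwise (away from the locus G = 0), and its fixed points in the open set {G ≠ 0} are exactly the points of Γ. -/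
/-! Writing `G = ∂F/∂z` and `b = (0:0:1)`, we have `α̃(v) = G(v) • v - 2F(v) • b`. Hence
`α̃(v) = G(v) • v` as soon as `F(v) = 0`. Conversely, if `α̃(v) = c • v` but `F(v) ≠ 0`, then
`(G(v) - c) • v = 2F(v) • b` forces `v` onto the line through `b`, where the cubic `F` vanishes
because it vanishes at `b`. -/

noncomputable section

open MvPolynomial

/-- The rational map `(x:y:z) ↦ (x : y : z - 2F/F_z)`, written on homogeneous coordinates. -/
def alphaTilde (F : MvPolynomial (Fin 3) ℂ) (v : Fin 3 → ℂ) : Fin 3 → ℂ :=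
  ![v 0 * eval v (pderiv 2 F), v 1 * eval v (pderiv 2 F),
    v 2 * eval v (pderiv 2 F) - 2 * eval v F]

theorem MvPolynomial.IsHomogeneous.eval_smul {σ R : Type*} [CommSemiring R]
    {F : MvPolynomial σ R} {n : ℕ} (hF : F.IsHomogeneous n) (c : R) (v : σ → R) :
    eval (c • v) F = c ^ n * eval v F := by
  rw [eval_eq, eval_eq, Finset.mul_sum]
  refine Finset.sum_congr rfl fun d hd => ?_
  have hdeg : ∑ i ∈ d.support, d i = n := by
    simpa [Finsupp.weight, Finsupp.linearCombination, Finsupp.sum] using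
      hF (mem_support_iff.mp hd)
  simp only [Pi.smul_apply, smul_eq_mul, mul_pow, Finset.prod_mul_distrib,
    Finset.prod_pow_eq_pow_sum, hdeg]
  ring

theorem alphaTilde_eq_sub_smul_single (F : MvPolynomial (Fin 3) ℂ) (v : Fin 3 → ℂ) :
    alphaTilde F v = eval v (pderiv 2 F) • v - (2 * eval v F) • Pi.single 2 1 := by
  ext i
  fin_cases i <;> simp [alphaTilde, mul_comm]

theorem alphaTilde_eq_smul_of_eval_eq_zero {F : MvPolynomial (Fin 3) ℂ} {v : Fin 3 → ℂ}
    (hFv : eval v F = 0) : alphaTilde F v = eval v (pderiv 2 F) • v := by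
  simp [alphaTilde_eq_sub_smul_single, hFv]

theorem exists_eq_smul_single_of_alphaTilde_eq_smul {F : MvPolynomial (Fin 3) ℂ}
    {v : Fin 3 → ℂ} {c : ℂ} (hc : alphaTilde F v = c • v) (hFv : eval v F ≠ 0) :
    ∃ t : ℂ, v = t • Pi.single 2 1 := by
  have key : (eval v (pderiv 2 F) - c) • v = (2 * eval v F) • Pi.single 2 1 := by
    rw [sub_smul, ← hc, alphaTilde_eq_sub_smul_single, sub_sub_cancel]
  have hGc : eval v (pderiv 2 F) - c ≠ 0 := by
    rintro h
    rw [h, zero_smul, eq_comm, smul_eq_zero] at key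
    simp [hFv] at key
  refine ⟨(eval v (pderiv 2 F) - c)⁻¹ * (2 * eval v F), ?_⟩
  rw [mul_smul, ← key, inv_smul_smul₀ hGc]

theorem stmt15 (F : MvPolynomial (Fin 3) ℂ) (hF : F.IsHomogeneous 3)
    (hFb : eval (fun i : Fin 3 => if i = 2 then (1 : ℂ) else 0) F = 0) :
    ∀ v : Fin 3 → ℂ, v ≠ 0 → eval v (pderiv 2 F) ≠ 0 →
      ((∃ c : ℂ, c ≠ 0 ∧ alphaTilde F v = c • v) ↔ eval v F = 0) := by
  intro v _ hG
  constructor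
  · rintro ⟨c, -, hc⟩
    by_contra hFv
    obtain ⟨t, rfl⟩ := exists_eq_smul_single_of_alphaTilde_eq_smul hc hFv
    have hb : Pi.single 2 1 = fun i : Fin 3 => if i = 2 then (1 : ℂ) else 0 := by
      ext i
      simp [Pi.single_apply]
    exact hFv (by rw [hF.eval_smul, hb, hFb, mul_zero])
  · intro hFv
    exact ⟨_, hG, alphaTilde_eq_smul_of_eval_eq_zero hFv⟩
end
end
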